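/- Eval principle: if Δ; · ⊢ c ÷ A (c is a computation well-typed in the empty effect context), then Δ ⊢ eval(c) : A, where eval(c) is the evaluation of c into an expression. -/
import Mathlib


/-!
ECMTT (Effectful Contextual Modal Type Theory) extended with the `eval` expression
(Section 6.1 / Figure 7 of the paper), in de Bruijn representation with two separate
variable namespaces:
* Δ-indices for value variables `x : A` and modal variables `u :: A[Ψ]`
  (both live in the modal context Δ; index 0 is the most recently bound).
* Γ-indices for operations `op ÷ A ⇒ B` and continuations `k ∼: A @ S ⇒ B`.
An algebraic theory Ψ is a list of operation signatures (input, output).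
-/

inductive Ty : Type where
  | base : ℕ → Ty
  | unit : Ty
  | arrow : Ty → Ty → Ty
  | box : List (Ty × Ty) → Ty → Ty

/-- Algebraic theory: list of operation signatures `A ⇒ B`. -/
abbrev Theory := List (Ty × Ty)

/-- Modal-context hypotheses: value variables and modal variables. -/
inductive DHyp : Type where
  | val : Ty → DHyp
  | modal : Ty → Theory → DHyp

/-- Effect-context hypotheses: operations and continuations. -/
inductive GHyp : Type where
  | op : Ty → Ty → GHyp
  | cont : Ty → Ty → Ty → GHyp

abbrev DCtx := List DHyp
abbrev GCtx := List GHyp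

/-- An algebraic theory viewed as an effect context (operations only). -/
def thCtx (Ψ : Theory) : GCtx := Ψ.map fun p => GHyp.op p.1 p.2

mutual
  /-- Expressions (with the `eval [Θ] u` extension). -/
  inductive Expr : Type where
    | var : ℕ → Expr
    | unit : Expr
    | lam : Ty → Expr → Expr
    | app : Expr → Expr → Expr
    | box : Theory → Comp → Expr
    | letbox : Expr → Expr → Expr
    | eval : HSeq → ℕ → Expr              -- eval [Θ] u (Δ-index for u)
  /-- Computations. -/
  inductive Comp : Type where
    | ret : Expr → Comp
    | bind : Stmt → Comp → Comp
    | letbox : Expr → Comp → Comp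
  /-- Statements. -/
  inductive Stmt : Type where
    | op : ℕ → Expr → Stmt
    | cont : ℕ → Expr → Expr → Stmt
    | handle : ℕ → HSeq → Handler → Expr → Stmt
  /-- Handlers. -/
  inductive Handler : Type where
    | retc : Comp → Handler
    | opc : Handler → Comp → Handler
  /-- Handling sequences. -/
  inductive HSeq : Type where
    | nil : HSeq
    | cons : HSeq → Handler → Expr → Comp → HSeq
end

mutual
  /-- Expression typing `Δ ⊢ e : A` (with the `eval` rule of Figure 7). -/
  inductive ETy : DCtx → Expr → Ty → Prop where
    | var : Δ[x]? = some (.val A) → ETy Δ (.var x) A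
    | unit : ETy Δ .unit .unit
    | lam : ETy (.val A :: Δ) e B → ETy Δ (.lam A e) (.arrow A B)
    | app : ETy Δ e1 (.arrow A B) → ETy Δ e2 A → ETy Δ (.app e1 e2) B
    | box : CTy Δ (thCtx Ψ) c A → ETy Δ (.box Ψ c) (.box Ψ A)
    | letbox : ETy Δ e1 (.box Ψ A) → ETy (.modal A Ψ :: Δ) e2 B →
        ETy Δ (.letbox e1 e2) B
    | eval : Δ[u]? = some (.modal A Ψ) → TTy Δ [] Θ A Ψ B →
        ETy Δ (.eval Θ u) B
  /-- Computation typing `Δ; Γ ⊢ c ÷ A`. -/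
  inductive CTy : DCtx → GCtx → Comp → Ty → Prop where
    | ret : ETy Δ e A → CTy Δ Γ (.ret e) A
    | bind : STy Δ Γ s A → CTy (.val A :: Δ) Γ c B → CTy Δ Γ (.bind s c) B
    | letbox : ETy Δ e (.box Ψ A) → CTy (.modal A Ψ :: Δ) Γ c B →
        CTy Δ Γ (.letbox e c) B
  /-- Statement typing `Δ; Γ ⊢ s ÷ₛ A`. -/
  inductive STy : DCtx → GCtx → Stmt → Ty → Prop where
    | op : Γ[i]? = some (.op A B) → ETy Δ e A → STy Δ Γ (.op i e) B
    | cont : Γ[k]? = some (.cont A S B) → ETy Δ e1 A → ETy Δ e2 S →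
        STy Δ Γ (.cont k e1 e2) B
    | mvar : Δ[u]? = some (.modal A Ψ) → TTy Δ Ψ' Θ A Ψ B →
        HTy Δ Γ h B Ψ' S C → ETy Δ e S → STy Δ Γ (.handle u Θ h e) C
  /-- Handler typing `Δ; Γ ⊢ h ÷ A[Ψ] ⇒@S B`. -/
  inductive HTy : DCtx → GCtx → Handler → Ty → Theory → Ty → Ty → Prop where
    | retc : CTy (.val S :: .val A :: Δ) Γ c B → HTy Δ Γ (.retc c) A [] S B
    | opc : HTy Δ Γ h C Ψ S C' →
        CTy (.val S :: .val A :: Δ) (.cont B S C' :: Γ) c C' →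
        HTy Δ Γ (.opc h c) C ((A, B) :: Ψ) S C'
  /-- Handling-sequence typing `Δ; Ψ ⊢ Θ ÷ A[Ψ'] ⇒ B`. -/
  inductive TTy : DCtx → Theory → HSeq → Ty → Theory → Ty → Prop where
    | nil : Ψ' <+: Ψ → TTy Δ Ψ .nil A Ψ' A
    | cons : TTy Δ Ψ' Θ A Ψ'' B → HTy Δ (thCtx Ψ) h B Ψ' S C → ETy Δ e S →
        CTy (.val C :: Δ) (thCtx Ψ) c D → TTy Δ Ψ (.cons Θ h e c) A Ψ'' D
end

/-- Evaluation of a computation in the empty effect context into an expression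
(Figure 7c of the paper):
`eval(ret e) = e`;
`eval(x ← (u with [Θ] h @ e); c) = eval [Θ, (h @ e to x. c)] u`;
`eval(let box u = e in c) = let box u = e in eval(c)`.
The remaining cases cannot occur for computations typed in the empty effect
context, and are mapped to a dummy value. -/
def evalC : Comp → Expr
  | .ret e => e
  | .bind (.handle u Θ h e) c => .eval (.cons Θ h e c) u
  | .bind (.op _ _) _ => .unit
  | .bind (.cont _ _ _) _ => .unit
  | .letbox e c => .letbox e (evalC c)

/-- Eval principle, Lemma of Section 6.1:
if `Δ; · ⊢ c ÷ A` then `Δ ⊢ eval(c) : A`. -/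
theorem ecmtt_eval_principle :
    ∀ (Δ : DCtx) (c : Comp) (A : Ty), CTy Δ [] c A → ETy Δ (evalC c) A
  | _, .ret _, _, h => by cases h with | ret he => exact he
  | _, .bind s c, _, h => by
      cases h with
      | bind hs hc =>
        cases hs with
        | op hi _ => simp at hi
        | cont hk _ _ => simp at hk
        | mvar hu hT hH he => exact ETy.eval hu (TTy.cons hT hH he hc)
  | Δ, .letbox e c, _, h => by
      cases h with
      | letbox he hc => exact ETy.letbox he (ecmtt_eval_principle _ c _ hc)
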